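/- arXiv:math/0703272 — 2 statements merged into one kernel-verified Lean document; each statement's English description precedes it below -/
import Mathlib

section
/- Let (S_t)_{t≥0} be a proper family on a Banach space X with L = DS, and let (T_t)_{t>0} be a strongly continuous family of bounded operators with ||T_t|| = 1 + O(t) as t ↘ 0 and ||S_t u − T_t u|| = o(t) as t ↘ 0 for all u of the form u = e^{aL}v with a > 0 and v ∈ X. Then setting T_0 := id_X yields a proper family which is Chernoff equivalent to (S_t)_{t≥0}. -/
open Filter Topology

/-- The data of a closed, densely defined operator `L` (given as a total function, meaningful
on its domain `dom`) generating a strongly continuous semigroup `E t = e^{tL}` on `X`. -/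
structure Generator (X : Type*) [NormedAddCommGroup X] [NormedSpace ℝ X] where
  dom : Set X
  L : X → X
  E : ℝ → X →L[ℝ] X
  dense_dom : Dense dom
  closed_graph : IsClosed {p : X × X | p.1 ∈ dom ∧ L p.1 = p.2}
  E_zero : E 0 = ContinuousLinearMap.id ℝ X
  E_add : ∀ s t : ℝ, 0 ≤ s → 0 ≤ t → E (s + t) = (E s).comp (E t)
  E_cont : ∀ u : X, ContinuousOn (fun t => E t u) (Set.Ici 0)
  E_maps_dom : ∀ a : ℝ, 0 ≤ a → ∀ v ∈ dom, E a v ∈ dom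
  E_deriv : ∀ v ∈ dom,
    Tendsto (fun t : ℝ => t⁻¹ • (E t v - v)) (𝓝[>] 0) (𝓝 (L v))

/-- `S` is a proper family with generator `G` (i.e. `DS = G.L`): `S 0 = id`, `S` is strongly
continuous, `‖S t‖ = 1 + O(t)` as `t ↘ 0`, and `(S_t - id)u/t → Lu` for all
`u = e^{aL}v`, `a > 0`, `v ∈ dom L`. -/
def IsProperFamily {X : Type*} [NormedAddCommGroup X] [NormedSpace ℝ X]
    (S : ℝ → X →L[ℝ] X) (G : Generator X) : Prop :=
  S 0 = ContinuousLinearMap.id ℝ X ∧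
  (∀ u : X, ContinuousOn (fun t => S t u) (Set.Ici 0)) ∧
  (∃ C ε : ℝ, 0 < C ∧ 0 < ε ∧ ∀ t ∈ Set.Ioc (0:ℝ) ε, ‖S t‖ ≤ 1 + C * t) ∧
  (∀ a : ℝ, 0 < a → ∀ v ∈ G.dom,
    Tendsto (fun t : ℝ => t⁻¹ • (S t (G.E a v) - G.E a v)) (𝓝[>] 0)
      (𝓝 (G.L (G.E a v))))

/-- Variant of the Chernoff-equivalence criterion: if `‖T_t‖ = 1 + O(t)` and
`‖S_t u − T_t u‖ = o(t)` for all `u = e^{aL}v` with `a > 0`, `v ∈ X`, then `T` (extended by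
`T_0 := id`) is a proper family Chernoff equivalent to `S`. -/
theorem properFamily_of_littleO_pointwise
    {X : Type*} [NormedAddCommGroup X] [NormedSpace ℝ X] [CompleteSpace X]
    (G : Generator X) (S T : ℝ → X →L[ℝ] X)
    (hS : IsProperFamily S G)
    (hTcont : ∀ u : X, ContinuousOn (fun t => T t u) (Set.Ioi 0))
    (hTnorm : ∃ C ε : ℝ, 0 < C ∧ 0 < ε ∧ ∀ t ∈ Set.Ioc (0:ℝ) ε, ‖T t‖ ≤ 1 + C * t)
    (hST : ∀ a : ℝ, 0 < a → ∀ v : X,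
      (fun t => ‖S t (G.E a v) - T t (G.E a v)‖) =o[𝓝[>] (0:ℝ)] fun t => t) :
    IsProperFamily (fun t => if t = 0 then ContinuousLinearMap.id ℝ X else T t) G := by
  obtain ⟨hS0, hScont, _hSb, hSderiv⟩ := hS
  obtain ⟨C, ε, hC, hε, hTb⟩ := hTnorm
  -- the extended family agrees with `T` on `(0, ∞)`
  have hTeq : ∀ᶠ t in 𝓝[>] (0:ℝ),
      (if t = 0 then ContinuousLinearMap.id ℝ X else T t) = T t := by
    filter_upwards [self_mem_nhdsWithin] with t ht
    exact if_neg (ne_of_gt ht)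
  -- strong continuity of S at 0+
  have hSzero : ∀ u : X, Tendsto (fun t => S t u) (𝓝[>] 0) (𝓝 u) := by
    intro u
    have h := (hScont u 0 Set.self_mem_Ici).tendsto
    rw [hS0] at h
    exact h.mono_left (nhdsWithin_mono _ Set.Ioi_subset_Ici_self)
  -- S - T tends to 0 on the E-range
  have hSTzero : ∀ a : ℝ, 0 < a → ∀ v : X,
      Tendsto (fun t => S t (G.E a v) - T t (G.E a v)) (𝓝[>] 0) (𝓝 0) := by
    intro a ha v
    rw [tendsto_zero_iff_norm_tendsto_zero]
    have hid : Tendsto (fun t : ℝ => t) (𝓝[>] (0:ℝ)) (𝓝 0) :=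
      tendsto_id.mono_left nhdsWithin_le_nhds
    exact ((hST a ha v).isBigO).trans_tendsto hid
  -- T tends to identity strongly on the E-range
  have hTw : ∀ a : ℝ, 0 < a → ∀ v : X,
      Tendsto (fun t => T t (G.E a v)) (𝓝[>] 0) (𝓝 (G.E a v)) := by
    intro a ha v
    have := (hSzero (G.E a v)).sub (hSTzero a ha v)
    simpa using this
  -- T tends to identity strongly, everywhere
  have hTu : ∀ u : X, Tendsto (fun t => T t u) (𝓝[>] 0) (𝓝 u) := by
    intro u
    rw [tendsto_iff_norm_sub_tendsto_zero]
    rw [NormedAddCommGroup.tendsto_nhds_zero]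
    intro ε' hε'
    -- pick a > 0 with ‖E a u - u‖ small
    have hEu : Tendsto (fun a => G.E a u) (𝓝[>] 0) (𝓝 u) := by
      have h := (G.E_cont u 0 Set.self_mem_Ici).tendsto
      rw [G.E_zero] at h
      exact h.mono_left (nhdsWithin_mono _ Set.Ioi_subset_Ici_self)
    have : ∀ᶠ a in 𝓝[>] (0:ℝ), ‖G.E a u - u‖ < ε' / 4 := by
      have := hEu.eventually (Metric.ball_mem_nhds u (by positivity : (0:ℝ) < ε'/4))
      filter_upwards [this] with a ha
      simpa [dist_eq_norm] using ha
    obtain ⟨a, haw, ha⟩ := (this.and eventually_mem_nhdsWithin).exists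
    set w := G.E a u with hw
    have h1 : ∀ᶠ t in 𝓝[>] (0:ℝ), ‖T t w - w‖ < ε' / 4 := by
      have := (hTw a ha u).eventually (Metric.ball_mem_nhds w (by positivity : (0:ℝ) < ε'/4))
      filter_upwards [this] with t ht
      simpa [dist_eq_norm] using ht
    have h2 : ∀ᶠ t in 𝓝[>] (0:ℝ), t ∈ Set.Ioc (0:ℝ) (min ε (1/C)) :=
      Ioc_mem_nhdsGT_of_mem ⟨le_refl _, lt_min hε (by positivity)⟩
    filter_upwards [h1, h2] with t ht1 ht2
    rw [norm_norm]
    have htpos : 0 < t := ht2.1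
    have htε : t ≤ ε := le_trans ht2.2 (min_le_left _ _)
    have htC : C * t ≤ 1 := by
      have := le_trans ht2.2 (min_le_right _ _)
      calc C * t ≤ C * (1/C) := by nlinarith
        _ = 1 := by field_simp
    have hTn : ‖T t‖ ≤ 2 := le_trans (hTb t ⟨htpos, htε⟩) (by linarith)
    have key : T t u - u = T t (u - w) + (T t w - w) + (w - u) := by
      simp only [map_sub]; abel
    calc ‖T t u - u‖ ≤ ‖T t (u - w)‖ + ‖T t w - w‖ + ‖w - u‖ := by
          rw [key]; exact norm_add₃_le
      _ ≤ 2 * ‖u - w‖ + ‖T t w - w‖ + ‖w - u‖ := by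
          have h5 := (T t).le_opNorm (u - w)
          nlinarith [norm_nonneg (u - w), norm_nonneg (T t (u - w))]
      _ < 2 * (ε'/4) + ε'/4 + ε'/4 := by
          have h3 : ‖u - w‖ < ε'/4 := by rwa [norm_sub_rev] at haw
          have h4 : ‖w - u‖ < ε'/4 := haw
          gcongr
      _ = ε' := by ring
  refine ⟨if_pos rfl, ?_, ?_, ?_⟩
  · -- strong continuity on [0, ∞)
    intro u t ht
    rcases eq_or_lt_of_le (show (0:ℝ) ≤ t from ht) with h0 | h0
    · subst h0
      rw [ContinuousWithinAt]
      have heq : Set.Ici (0:ℝ) = insert 0 (Set.Ioi 0) := Set.Ioi_insert.symm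
      rw [heq, nhdsWithin_insert, tendsto_sup]
      constructor
      · simpa using (tendsto_pure_nhds
          (fun s : ℝ => (if s = 0 then ContinuousLinearMap.id ℝ X else T s) u) 0)
      · have heq2 : (fun s : ℝ => T s u) =ᶠ[𝓝[>] (0:ℝ)]
            (fun s => (if s = 0 then ContinuousLinearMap.id ℝ X else T s) u) := by
          filter_upwards [hTeq] with s hs; rw [hs]
        simpa using (hTu u).congr' heq2
    · have hca : ContinuousAt (fun s => T s u) t :=
        (hTcont u t h0).continuousAt (Ioi_mem_nhds h0)
      have heq : (fun s : ℝ => (if s = 0 then ContinuousLinearMap.id ℝ X else T s) u)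
          =ᶠ[𝓝 t] fun s => T s u := by
        filter_upwards [Ioi_mem_nhds h0] with s hs
        rw [if_neg (ne_of_gt hs)]
      exact (hca.congr heq.symm).continuousWithinAt
  · -- norm bound
    exact ⟨C, ε, hC, hε, fun t ht => by
      simp only [if_neg (ne_of_gt ht.1)]; exact hTb t ht⟩
  · -- derivative
    intro a ha v hv
    set w := G.E a v with hw
    have hlim2 : Tendsto (fun t : ℝ => t⁻¹ • (S t w - T t w)) (𝓝[>] 0) (𝓝 0) := by
      rw [tendsto_zero_iff_norm_tendsto_zero]
      have hdiv : Tendsto (fun t : ℝ => ‖S t w - T t w‖ / t) (𝓝[>] 0) (𝓝 0) :=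
        (hST a ha v).tendsto_div_nhds_zero
      refine hdiv.congr' ?_
      filter_upwards [self_mem_nhdsWithin] with t ht
      rw [norm_smul, Real.norm_eq_abs, abs_inv, abs_of_pos ht]
      rw [div_eq_inv_mul]
    have := (hSderiv a ha v hv).sub hlim2
    rw [sub_zero] at this
    refine this.congr' ?_
    filter_upwards [hTeq] with t ht
    simp only [ht]
    rw [← smul_sub]
    congr 1
    abel
end

section
/- Gaussian moment estimate: Let B : ℝ^m × ℝ^m → ℝ be a symmetric bilinear form and f : [0,t₀] × ℝ^m → ℂ^k a C¹ map with |f(t,ξ)| ≤ C and |∂f/∂ξ_j(t,ξ)| ≤ C for all (t,ξ). Then as t ↘ 0, ∫_{ℝ^m} (4πt)^{−m/2} e^{−|ξ|²/(4t)} B(ξ,ξ) f(t,ξ) dξ = 2t · tr(B) · ∫_{ℝ^m} (4πt)^{−m/2} e^{−|ξ|²/(4t)} f(t,ξ) dξ + O(t^{3/2}), where the constant in the O(t^{3/2}) term depends only on C, m, and an upper bound on |B|. -/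
/-!
Let `ρ_t(ξ) = (4πt)^{-m/2} e^{-|ξ|²/4t}` and write `f(t,ξ) = f(t,0) + r(ξ)`, where
`‖r(ξ)‖ ≤ C‖ξ‖` by the mean value inequality. The constant `f(t,0)` contributes equally to both
sides: `ρ_t` is the product of the centred Gaussian densities of variance `2t` in the coordinates,
so it has mass one and second moments `∫ ρ_t ξᵢ ξⱼ = 2t δᵢⱼ`, whence `∫ ρ_t B(ξ,ξ) = 2t tr B`.
The two remaining terms are bounded by `|B| C ∫ ρ_t ‖ξ‖³` and `t |tr B| C ∫ ρ_t ‖ξ‖`, both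
`O(t^{3/2})` since `ρ_t` is `ρ_1` rescaled by `√t`: `∫ ρ_t ‖ξ‖^p = t^{p/2} ∫ ρ_1 ‖ξ‖^p`.
-/

open MeasureTheory Real Module

lemma pow_mul_exp_neg_mul_sq_le {b r : ℝ} (hb : 0 < b) (hr : 0 ≤ r) (p : ℕ) :
    r ^ p * exp (-b * r ^ 2) ≤ (1 + p.factorial * (2 / b) ^ p) * exp (-(b / 2) * r ^ 2) := by
  have hp : r ^ p ≤ 1 + r ^ (2 * p) := by
    rcases le_total r 1 with h | h
    · linarith [pow_le_one₀ hr h (n := p), pow_nonneg hr (2 * p)]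
    · linarith [pow_le_pow_right₀ h (by omega : p ≤ 2 * p)]
  have hfac :
      r ^ (2 * p) * exp (-b * r ^ 2) ≤ p.factorial * (2 / b) ^ p * exp (-(b / 2) * r ^ 2) := by
    have := pow_div_factorial_le_exp (x := b / 2 * r ^ 2) (by positivity) p
    rw [div_le_iff₀ (by positivity)] at this
    calc r ^ (2 * p) * exp (-b * r ^ 2)
        = (2 / b) ^ p * (b / 2 * r ^ 2) ^ p * exp (-(b / 2) * r ^ 2) * exp (-(b / 2) * r ^ 2) := by
          rw [← mul_pow, mul_assoc, ← exp_add, pow_mul]; field_simp; ring_nf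
      _ ≤ (2 / b) ^ p * (exp (b / 2 * r ^ 2) * p.factorial) * exp (-(b / 2) * r ^ 2)
            * exp (-(b / 2) * r ^ 2) := by gcongr
      _ = _ := by
          have hcancel : exp (b / 2 * r ^ 2) * exp (-(b / 2) * r ^ 2) = 1 := by
            rw [← exp_add]; ring_nf; exact exp_zero
          linear_combination (2 / b) ^ p * p.factorial * exp (-(b / 2) * r ^ 2) * hcancel
  have hexp : exp (-b * r ^ 2) ≤ exp (-(b / 2) * r ^ 2) := by
    gcongr; nlinarith [sq_nonneg r]
  nlinarith [exp_pos (-b * r ^ 2)]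

section HeatKernel

variable {V : Type*} [NormedAddCommGroup V] [InnerProductSpace ℝ V]

noncomputable def heatKernel (t : ℝ) (ξ : V) : ℝ :=
  (4 * π * t) ^ (-(finrank ℝ V : ℝ) / 2) * exp (-‖ξ‖ ^ 2 / (4 * t))

lemma heatKernel_nonneg {t : ℝ} (ht : 0 ≤ t) (ξ : V) : 0 ≤ heatKernel t ξ := by
  unfold heatKernel; positivity

lemma continuous_heatKernel (t : ℝ) : Continuous (heatKernel t : V → ℝ) := by
  unfold heatKernel; fun_prop

lemma heatKernel_eq_mul_exp (t : ℝ) (ξ : V) :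
    heatKernel t ξ = (4 * π * t) ^ (-(finrank ℝ V : ℝ) / 2) * exp (-(4 * t)⁻¹ * ‖ξ‖ ^ 2) := by
  rw [heatKernel]; ring_nf

lemma heatKernel_sqrt_smul {t : ℝ} (ht : 0 < t) (u : V) :
    heatKernel t (√t • u) = (√t ^ finrank ℝ V)⁻¹ * heatKernel 1 u := by
  have hnorm : ‖√t • u‖ ^ 2 = t * ‖u‖ ^ 2 := by
    rw [norm_smul, mul_pow, norm_of_nonneg (sqrt_nonneg t), sq_sqrt ht.le]
  have hpow : (4 * π * t) ^ (-(finrank ℝ V : ℝ) / 2)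
      = (√t ^ finrank ℝ V)⁻¹ * (4 * π * 1) ^ (-(finrank ℝ V : ℝ) / 2) := by
    rw [mul_one, mul_rpow (by positivity) ht.le, sqrt_eq_rpow, ← rpow_natCast, ← rpow_mul ht.le,
      ← rpow_neg ht.le]
    ring_nf
  rw [heatKernel, heatKernel, hnorm, hpow]
  field_simp

lemma norm_heatKernel_smul_le {E : Type*} [NormedAddCommGroup E] [NormedSpace ℝ E] {t : ℝ}
    (ht : 0 < t) {g : V → E} {c : ℝ} {p : ℕ} (hbound : ∀ ξ, ‖g ξ‖ ≤ c * ‖ξ‖ ^ p) (ξ : V) :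
    ‖heatKernel t ξ • g ξ‖ ≤ c * (heatKernel t ξ * ‖ξ‖ ^ p) := by
  rw [norm_smul, norm_of_nonneg (heatKernel_nonneg ht.le ξ), mul_left_comm]
  exact mul_le_mul_of_nonneg_left (hbound ξ) (heatKernel_nonneg ht.le ξ)

variable [FiniteDimensional ℝ V] [MeasurableSpace V] [BorelSpace V]

variable (V) in
noncomputable def heatMoment (p : ℕ) : ℝ := ∫ u : V, heatKernel 1 u * ‖u‖ ^ p

lemma heatMoment_nonneg (p : ℕ) : 0 ≤ heatMoment V p :=
  integral_nonneg fun u => mul_nonneg (heatKernel_nonneg zero_le_one u) (by positivity)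

lemma integral_heatKernel {t : ℝ} (ht : 0 < t) : ∫ ξ : V, heatKernel t ξ = 1 := by
  simp_rw [heatKernel_eq_mul_exp]
  rw [integral_const_mul, GaussianFourier.integral_rexp_neg_mul_sq_norm (by positivity),
    div_inv_eq_mul, show π * (4 * t) = 4 * π * t by ring, ← rpow_add (by positivity)]
  ring_nf; simp

lemma integrable_exp_neg_mul_sq_norm {b : ℝ} (hb : 0 < b) :
    Integrable (fun ξ : V => exp (-b * ‖ξ‖ ^ 2)) := by
  refine .of_integral_ne_zero ?_
  rw [GaussianFourier.integral_rexp_neg_mul_sq_norm hb]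
  positivity

lemma integrable_exp_neg_mul_sq_norm_mul_pow {b : ℝ} (hb : 0 < b) (p : ℕ) :
    Integrable (fun ξ : V => exp (-b * ‖ξ‖ ^ 2) * ‖ξ‖ ^ p) := by
  refine ((integrable_exp_neg_mul_sq_norm (half_pos hb)).const_mul
    (1 + p.factorial * (2 / b) ^ p)).mono' (by fun_prop) (.of_forall fun ξ => ?_)
  rw [norm_of_nonneg (by positivity), mul_comm]
  exact pow_mul_exp_neg_mul_sq_le hb (norm_nonneg ξ) p

lemma integrable_heatKernel_mul_pow {t : ℝ} (ht : 0 < t) (p : ℕ) :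
    Integrable (fun ξ : V => heatKernel t ξ * ‖ξ‖ ^ p) := by
  simp_rw [heatKernel_eq_mul_exp, mul_assoc]
  exact (integrable_exp_neg_mul_sq_norm_mul_pow (by positivity) p).const_mul _

lemma integral_heatKernel_mul_pow {t : ℝ} (ht : 0 < t) (p : ℕ) :
    ∫ ξ : V, heatKernel t ξ * ‖ξ‖ ^ p = √t ^ p * heatMoment V p := by
  have hscale := Measure.integral_comp_smul_of_nonneg volume
    (fun ξ : V => heatKernel t ξ * ‖ξ‖ ^ p) (√t) (hR := sqrt_nonneg t)
  simp_rw [heatKernel_sqrt_smul ht, norm_smul, norm_of_nonneg (sqrt_nonneg t), mul_pow] at hscale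
  have hrw : ∀ u : V, (√t ^ finrank ℝ V)⁻¹ * heatKernel 1 u * (√t ^ p * ‖u‖ ^ p)
      = (√t ^ finrank ℝ V)⁻¹ * (√t ^ p * (heatKernel 1 u * ‖u‖ ^ p)) := fun u => by ring
  simp_rw [hrw, integral_const_mul, smul_eq_mul] at hscale
  exact (mul_left_cancel₀ (by positivity) hscale).symm

lemma integrable_heatKernel_smul {E : Type*} [NormedAddCommGroup E] [NormedSpace ℝ E] {t : ℝ}
    (ht : 0 < t) {g : V → E} (hg : AEStronglyMeasurable g) {c : ℝ} {p : ℕ}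
    (hbound : ∀ ξ, ‖g ξ‖ ≤ c * ‖ξ‖ ^ p) :
    Integrable (fun ξ => heatKernel t ξ • g ξ) :=
  ((integrable_heatKernel_mul_pow ht p).const_mul c).mono'
    ((continuous_heatKernel t).aestronglyMeasurable.smul hg)
    (.of_forall (norm_heatKernel_smul_le ht hbound))

lemma norm_integral_heatKernel_smul_le {E : Type*} [NormedAddCommGroup E] [NormedSpace ℝ E]
    {t : ℝ} (ht : 0 < t) {g : V → E} {c : ℝ} {p : ℕ} (hbound : ∀ ξ, ‖g ξ‖ ≤ c * ‖ξ‖ ^ p) :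
    ‖∫ ξ, heatKernel t ξ • g ξ‖ ≤ c * √t ^ p * heatMoment V p := by
  refine (norm_integral_le_of_norm_le ((integrable_heatKernel_mul_pow ht p).const_mul c)
    (.of_forall (norm_heatKernel_smul_le ht hbound))).trans_eq ?_
  rw [integral_const_mul, integral_heatKernel_mul_pow ht, mul_assoc]

end HeatKernel

section GaussianMoments

open ProbabilityTheory
open scoped NNReal

lemma integral_gaussianPDFReal_mul_id (μ : ℝ) {v : ℝ≥0} (hv : v ≠ 0) :
    ∫ y, gaussianPDFReal μ v y * y = μ := by
  have hmean := integral_id_gaussianReal (μ := μ) (v := v)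
  rw [integral_gaussianReal_eq_integral_smul hv] at hmean
  simpa only [smul_eq_mul] using hmean

lemma integral_gaussianPDFReal_mul_sq (μ : ℝ) {v : ℝ≥0} (hv : v ≠ 0) :
    ∫ y, gaussianPDFReal μ v y * y ^ 2 = v + μ ^ 2 := by
  have hvar := variance_eq_sub (memLp_id_gaussianReal (μ := μ) (v := v) 2)
  simp only [variance_id_gaussianReal, Pi.pow_apply, id,
    integral_gaussianReal_eq_integral_smul hv, smul_eq_mul] at hvar
  rw [integral_gaussianPDFReal_mul_id μ hv] at hvar
  linarith

variable {ι : Type*} [Fintype ι]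

lemma heatKernel_toLp {t : ℝ} {v : ℝ≥0} (hv : (v : ℝ) = 2 * t) (x : ι → ℝ) :
    heatKernel t (WithLp.toLp 2 x) = ∏ l, gaussianPDFReal 0 v (x l) := by
  have ht : 0 ≤ t := by linarith [v.2]
  have hpow : (4 * π * t) ^ (-(Fintype.card ι : ℝ) / 2) = (√(4 * π * t))⁻¹ ^ Fintype.card ι := by
    rw [inv_pow, sqrt_eq_rpow, ← rpow_natCast, ← rpow_mul (by positivity),
      ← rpow_neg (by positivity)]
    ring_nf
  simp only [heatKernel, gaussianPDFReal, finrank_euclideanSpace, EuclideanSpace.real_norm_sq_eq,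
    Finset.prod_mul_distrib, Finset.prod_const, Finset.card_univ, ← exp_sum, hv, hpow]
  rw [show 2 * π * (2 * t) = 4 * π * t by ring, neg_div, Finset.sum_div, ← Finset.sum_neg_distrib]
  congr 3 with l
  ring

lemma integral_heatKernel_mul_coord_mul_coord [DecidableEq ι] {t : ℝ} (ht : 0 < t) (i j : ι) :
    ∫ ξ : EuclideanSpace ℝ ι, heatKernel t ξ * (ξ i * ξ j) = if i = j then 2 * t else 0 := by
  obtain ⟨v, hvt⟩ : ∃ v : ℝ≥0, (v : ℝ) = 2 * t := ⟨⟨2 * t, by positivity⟩, rfl⟩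
  have hv : v ≠ 0 := by rw [← NNReal.coe_ne_zero, hvt]; positivity
  set g : ι → ℝ → ℝ := fun l y =>
    gaussianPDFReal 0 v y * ((if l = i then y else 1) * (if l = j then y else 1)) with hg
  have hprod (x : ι → ℝ) : heatKernel t (WithLp.toLp 2 x) * (x i * x j) = ∏ l, g l (x l) := by
    simp only [hg, Finset.prod_mul_distrib, Finset.prod_ite_eq', Finset.mem_univ, if_true,
      heatKernel_toLp hvt]
  rw [← (EuclideanSpace.volume_preserving_symm_measurableEquiv_toLp ι).symm.integral_comp']
  simp only [MeasurableEquiv.symm_symm, MeasurableEquiv.coe_toLp, hprod]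
  rw [integral_fintype_prod_volume_eq_prod]
  split_ifs with hij
  · subst hij
    rw [Finset.prod_eq_single i]
    · simp [hg, ← sq, integral_gaussianPDFReal_mul_sq 0 hv, hvt]
    · intro l _ hl; simp [hg, hl, integral_gaussianPDFReal_eq_one 0 hv]
    · simp
  · apply Finset.prod_eq_zero (Finset.mem_univ i)
    simp [hg, hij, integral_gaussianPDFReal_mul_id 0 hv]

end GaussianMoments

section QuadraticForm

variable {ι : Type*} [Fintype ι] {Λ : ℝ} {A : Matrix ι ι ℝ}

lemma abs_sum_sum_mul_mul_le (hA : ∀ i j, |A i j| ≤ Λ) (ξ : EuclideanSpace ℝ ι) :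
    |∑ i, ∑ j, A i j * ξ i * ξ j| ≤ Λ * Fintype.card ι ^ 2 * ‖ξ‖ ^ 2 := by
  have hcoord (i : ι) : |ξ i| ≤ ‖ξ‖ := by simpa using PiLp.norm_apply_le ξ i
  have hterm (i j : ι) : |A i j * ξ i * ξ j| ≤ Λ * ‖ξ‖ ^ 2 := by
    have hΛ : 0 ≤ Λ := (abs_nonneg _).trans (hA i j)
    rw [abs_mul, abs_mul, sq, ← mul_assoc]
    exact mul_le_mul (mul_le_mul (hA i j) (hcoord i) (abs_nonneg _) hΛ) (hcoord j) (abs_nonneg _)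
      (by positivity)
  calc |∑ i, ∑ j, A i j * ξ i * ξ j| ≤ ∑ i, ∑ j, |A i j * ξ i * ξ j| :=
        (Finset.abs_sum_le_sum_abs _ _).trans
          (Finset.sum_le_sum fun i _ => Finset.abs_sum_le_sum_abs _ _)
    _ ≤ ∑ _i : ι, ∑ _j : ι, Λ * ‖ξ‖ ^ 2 := by gcongr with i _ j _; exact hterm i j
    _ = Λ * Fintype.card ι ^ 2 * ‖ξ‖ ^ 2 := by simp; ring

lemma abs_trace_le (hA : ∀ i j, |A i j| ≤ Λ) : |A.trace| ≤ Fintype.card ι * Λ := by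
  calc |A.trace| ≤ ∑ i, |A i i| := Finset.abs_sum_le_sum_abs _ _
    _ ≤ ∑ _i : ι, Λ := by gcongr with i; exact hA i i
    _ = Fintype.card ι * Λ := by simp

lemma integral_heatKernel_mul_sum_sum_mul_mul {t : ℝ} (ht : 0 < t) (A : Matrix ι ι ℝ) :
    ∫ ξ : EuclideanSpace ℝ ι, heatKernel t ξ * ∑ i, ∑ j, A i j * ξ i * ξ j = 2 * t * A.trace := by
  classical
  have hint (i j : ι) : Integrable (fun ξ : EuclideanSpace ℝ ι => heatKernel t ξ * (ξ i * ξ j)) :=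
    integrable_heatKernel_smul ht (c := 1) (p := 2) (by fun_prop) fun ξ => by
      rw [norm_mul, one_mul, sq]
      exact mul_le_mul (PiLp.norm_apply_le ξ i) (PiLp.norm_apply_le ξ j) (norm_nonneg _)
        (norm_nonneg _)
  have hrw (ξ : EuclideanSpace ℝ ι) : heatKernel t ξ * ∑ i, ∑ j, A i j * ξ i * ξ j
      = ∑ i, ∑ j, A i j * (heatKernel t ξ * (ξ i * ξ j)) := by
    simp_rw [Finset.mul_sum]; congr! 2; ring
  simp_rw [hrw]
  rw [integral_finsetSum
    (f := fun i (ξ : EuclideanSpace ℝ ι) => ∑ j, A i j * (heatKernel t ξ * (ξ i * ξ j))) _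
    fun i _ => integrable_finsetSum _ fun j _ => (hint i j).const_mul _]
  simp_rw [integral_finsetSum _ fun j _ => (hint _ j).const_mul _, integral_const_mul,
    integral_heatKernel_mul_coord_mul_coord ht, mul_ite, mul_zero, Finset.sum_ite_eq,
    Finset.mem_univ, if_true, Matrix.trace, Matrix.diag, Finset.mul_sum]
  exact Finset.sum_congr rfl fun _ _ => by ring

end QuadraticForm

lemma integral_mul_smul_sub_smul_integral_smul_sub_const {α E : Type*} [MeasurableSpace α]
    {μ : Measure α} [NormedAddCommGroup E] [NormedSpace ℝ E] [CompleteSpace E] {ρ Q : α → ℝ}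
    {F : α → E} (x₀ : E)
    (hρ : ∫ a, ρ a ∂μ = 1) (hρQ : Integrable (fun a => ρ a * Q a) μ)
    (hF : Integrable (fun a => ρ a • (F a - x₀)) μ)
    (hQF : Integrable (fun a => (ρ a * Q a) • (F a - x₀)) μ) :
    (∫ a, (ρ a * Q a) • F a ∂μ) - (∫ a, ρ a * Q a ∂μ) • ∫ a, ρ a • F a ∂μ
      = (∫ a, (ρ a * Q a) • (F a - x₀) ∂μ) - (∫ a, ρ a * Q a ∂μ) • ∫ a, ρ a • (F a - x₀) ∂μ := by
  have hρint : Integrable ρ μ := .of_integral_ne_zero (by rw [hρ]; exact one_ne_zero)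
  have hsplit (w : α → ℝ) (hw : Integrable w μ) (hwF : Integrable (fun a => w a • (F a - x₀)) μ) :
      ∫ a, w a • F a ∂μ = ∫ a, w a • (F a - x₀) ∂μ + (∫ a, w a ∂μ) • x₀ := by
    rw [← integral_smul_const, ← integral_add hwF (hw.smul_const x₀)]
    simp_rw [← smul_add, sub_add_cancel]
  rw [hsplit _ hρQ hQF, hsplit _ hρint hF, hρ, one_smul, smul_add]
  abel

section Estimate

variable {ι E : Type*} [Fintype ι] [NormedAddCommGroup E] [NormedSpace ℝ E] [CompleteSpace E]

lemma norm_integral_heatKernel_quadratic_sub_le {t C Λ : ℝ} (ht : 0 < t) {A : Matrix ι ι ℝ}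
    (hA : ∀ i j, |A i j| ≤ Λ) {F : EuclideanSpace ℝ ι → E} (hF : Continuous F)
    (hlip : ∀ ξ, ‖F ξ - F 0‖ ≤ C * ‖ξ‖) :
    ‖(∫ ξ, (heatKernel t ξ * ∑ i, ∑ j, A i j * ξ i * ξ j) • F ξ)
        - (2 * t * A.trace) • ∫ ξ, heatKernel t ξ • F ξ‖
      ≤ (Λ * Fintype.card ι ^ 2 * C * heatMoment (EuclideanSpace ℝ ι) 3
          + 2 * Fintype.card ι * Λ * C * heatMoment (EuclideanSpace ℝ ι) 1) * √t ^ 3 := by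
  set Q : EuclideanSpace ℝ ι → ℝ := fun ξ => ∑ i, ∑ j, A i j * ξ i * ξ j
  have hQ : Continuous Q := by fun_prop
  have hQF (ξ) : ‖Q ξ • (F ξ - F 0)‖ ≤ Λ * Fintype.card ι ^ 2 * C * ‖ξ‖ ^ 3 := by
    have hQξ : |Q ξ| ≤ Λ * Fintype.card ι ^ 2 * ‖ξ‖ ^ 2 := abs_sum_sum_mul_mul_le hA ξ
    rw [norm_smul, norm_eq_abs]
    calc |Q ξ| * ‖F ξ - F 0‖ ≤ (Λ * Fintype.card ι ^ 2 * ‖ξ‖ ^ 2) * (C * ‖ξ‖) :=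
          mul_le_mul hQξ (hlip ξ) (norm_nonneg _) ((abs_nonneg _).trans hQξ)
      _ = Λ * Fintype.card ι ^ 2 * C * ‖ξ‖ ^ 3 := by ring
  have hr (ξ) : ‖F ξ - F 0‖ ≤ C * ‖ξ‖ ^ 1 := by simpa using hlip ξ
  have hρQ : Integrable (fun ξ => heatKernel t ξ * Q ξ) :=
    integrable_heatKernel_smul ht hQ.aestronglyMeasurable (c := Λ * Fintype.card ι ^ 2) (p := 2)
      fun ξ => abs_sum_sum_mul_mul_le hA ξ
  have hρr := integrable_heatKernel_smul ht (hF.sub continuous_const).aestronglyMeasurable hr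
  have hρQr : Integrable (fun ξ => (heatKernel t ξ * Q ξ) • (F ξ - F 0)) := by
    simpa only [mul_smul] using
      integrable_heatKernel_smul ht (g := fun ξ => Q ξ • (F ξ - F 0))
        (hQ.smul (hF.sub continuous_const)).aestronglyMeasurable hQF
  have hassoc : ∫ ξ, (heatKernel t ξ * Q ξ) • (F ξ - F 0)
      = ∫ ξ, heatKernel t ξ • Q ξ • (F ξ - F 0) := by
    simp_rw [mul_smul]
  have htr : |2 * t * A.trace| ≤ 2 * t * (Fintype.card ι * Λ) := by
    rw [abs_mul, abs_of_pos (by positivity)]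
    exact mul_le_mul_of_nonneg_left (abs_trace_le hA) (by positivity)
  rw [← integral_heatKernel_mul_sum_sum_mul_mul ht A,
    integral_mul_smul_sub_smul_integral_smul_sub_const (F 0) (integral_heatKernel ht) hρQ hρr hρQr,
    integral_heatKernel_mul_sum_sum_mul_mul ht A, hassoc]
  calc _ ≤ ‖∫ ξ, heatKernel t ξ • Q ξ • (F ξ - F 0)‖
        + |2 * t * A.trace| * ‖∫ ξ, heatKernel t ξ • (F ξ - F 0)‖ := by
        rw [← norm_eq_abs, ← norm_smul]; exact norm_sub_le _ _
    _ ≤ Λ * Fintype.card ι ^ 2 * C * √t ^ 3 * heatMoment (EuclideanSpace ℝ ι) 3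
          + 2 * t * (Fintype.card ι * Λ) * (C * √t ^ 1 * heatMoment (EuclideanSpace ℝ ι) 1) :=
        add_le_add (norm_integral_heatKernel_smul_le ht hQF)
          (mul_le_mul htr (norm_integral_heatKernel_smul_le ht hr) (norm_nonneg _)
            ((abs_nonneg _).trans htr))
    _ = _ := by
        linear_combination
          (-2 * Fintype.card ι * Λ * C * √t * heatMoment (EuclideanSpace ℝ ι) 1) * sq_sqrt ht.le

end Estimate

lemma ContDiffOn.differentiable_curry_of_prod_univ {E F G : Type*} [NormedAddCommGroup E]
    [NormedSpace ℝ E] [NormedAddCommGroup F] [NormedSpace ℝ F] [NormedAddCommGroup G]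
    [NormedSpace ℝ G] {f : E → F → G} {s : Set E} {n : WithTop ℕ∞}
    (hf : ContDiffOn ℝ n (fun p : E × F => f p.1 p.2) (s ×ˢ Set.univ)) (hn : n ≠ 0) {x : E}
    (hx : x ∈ s) : Differentiable ℝ (f x) := fun y =>
  (((hf.differentiableOn hn) (x, y) ⟨hx, trivial⟩).comp y
    ((differentiableWithinAt_const x).prodMk differentiableWithinAt_id)
    fun _ _ => ⟨hx, trivial⟩).differentiableAt Filter.univ_mem

/-- Gaussian moment estimate: for a symmetric bilinear form `B` (given by a symmetric matrix
`A` with entries bounded by `Λ`) and a `C¹` map `f : [0,t₀] × ℝ^m → ℂ^k` (here `ℝ^k`-valued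
vectors are replaced by `EuclideanSpace ℂ (Fin k)`) with `‖f‖, ‖∂f/∂ξ‖ ≤ C`, one has, as
`t ↘ 0`,
`∫ (4πt)^{-m/2} e^{-|ξ|²/4t} B(ξ,ξ) f(t,ξ) dξ
   = 2t·tr(B)·∫ (4πt)^{-m/2} e^{-|ξ|²/4t} f(t,ξ) dξ + O(t^{3/2})`,
with a constant depending only on `C`, `m` and `Λ`. -/
theorem gaussian_moment_estimate
    (m k : ℕ) (C Λ : ℝ) (hC : 0 ≤ C) (hΛ : 0 ≤ Λ) :
    ∃ K : ℝ, 0 < K ∧ ∀ (t₀ : ℝ), 0 < t₀ →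
      ∀ (A : Matrix (Fin m) (Fin m) ℝ), A.IsSymm → (∀ i j, |A i j| ≤ Λ) →
      ∀ (f : ℝ → EuclideanSpace ℝ (Fin m) → EuclideanSpace ℂ (Fin k)),
        ContDiffOn ℝ 1 (fun p : ℝ × EuclideanSpace ℝ (Fin m) => f p.1 p.2)
          (Set.Icc 0 t₀ ×ˢ Set.univ) →
        (∀ t ∈ Set.Icc (0:ℝ) t₀, ∀ ξ, ‖f t ξ‖ ≤ C ∧ ‖fderiv ℝ (f t) ξ‖ ≤ C) →
        ∀ t ∈ Set.Ioc (0:ℝ) t₀,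
          ‖(∫ ξ : EuclideanSpace ℝ (Fin m),
              ((4 * π * t) ^ (-(m:ℝ) / 2) * Real.exp (-‖ξ‖ ^ 2 / (4 * t))
                * ∑ i, ∑ j, A i j * ξ i * ξ j) • f t ξ)
            - (2 * t * A.trace) • ∫ ξ : EuclideanSpace ℝ (Fin m),
                ((4 * π * t) ^ (-(m:ℝ) / 2) * Real.exp (-‖ξ‖ ^ 2 / (4 * t))) • f t ξ‖
          ≤ K * t ^ ((3:ℝ) / 2) := by
  set K := Λ * m ^ 2 * C * heatMoment (EuclideanSpace ℝ (Fin m)) 3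
    + 2 * m * Λ * C * heatMoment (EuclideanSpace ℝ (Fin m)) 1
  have hK : 0 ≤ K := add_nonneg (mul_nonneg (by positivity) (heatMoment_nonneg 3))
    (mul_nonneg (by positivity) (heatMoment_nonneg 1))
  refine ⟨K + 1, by positivity, fun t₀ _ A _ hA f hf hfC t ⟨ht, htt₀⟩ => ?_⟩
  have htI : t ∈ Set.Icc 0 t₀ := ⟨ht.le, htt₀⟩
  have hdiff := hf.differentiable_curry_of_prod_univ one_ne_zero htI
  have hlip (ξ) : ‖f t ξ - f t 0‖ ≤ C * ‖ξ‖ := by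
    simpa using convex_univ.norm_image_sub_le_of_norm_fderiv_le (fun x _ => hdiff x)
      (fun x _ => (hfC t htI x).2) (Set.mem_univ 0) (Set.mem_univ ξ)
  have hρ (ξ : EuclideanSpace ℝ (Fin m)) :
      (4 * π * t) ^ (-(m:ℝ) / 2) * exp (-‖ξ‖ ^ 2 / (4 * t)) = heatKernel t ξ := by
    simp [heatKernel]
  have hbound := norm_integral_heatKernel_quadratic_sub_le ht hA hdiff.continuous hlip
  rw [Fintype.card_fin] at hbound
  simp_rw [hρ]
  calc _ ≤ K * √t ^ 3 := hbound
    _ = K * t ^ ((3:ℝ) / 2) := by rw [sqrt_eq_rpow, ← rpow_natCast, ← rpow_mul ht.le]; norm_num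
    _ ≤ (K + 1) * t ^ ((3:ℝ) / 2) := by gcongr; linarith
end
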